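/- arXiv:2207.10850 — 6 statements merged into one kernel-verified Lean document; each statement's English description precedes it below -/
import Mathlib

section
/- Let G be a graph on n vertices with average degree d > 16 such that G has no cycle of length at most ℓ for some even ℓ. Let A be the adjacency matrix of G and Γ = D + d·Id where D is the diagonal degree matrix. Then the spectral norm of Γ^{-1/2} A Γ^{-1/2} is strictly less than 2 n^{1/ℓ} / √d. -/
open Matrix

/-- The spectral norm (ℓ2 → ℓ2 operator norm) of a real square matrix. -/
noncomputable def specNorm {m : Type*} [Fintype m] [DecidableEq m] (M : Matrix m m ℝ) : ℝ :=
  ‖LinearMap.toContinuousLinearMap (Matrix.toEuclideanLin M)‖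

/-!
Both sides are compared with `1`. Let `Δ` be the maximum degree. The Schur test with the weight
vector `Γ^{1/2} 𝟙` bounds the norm of `Γ^{-1/2} A Γ^{-1/2}` by
`max_v deg v / (deg v + d) ≤ Δ / (Δ + d) < 1`.

Conversely, repeatedly deleting a vertex of degree `< d / 2` never lowers the degree sum below `d`
times the number of vertices, so it stops at a nonempty induced subgraph of minimum degree
`δ ≥ d / 2`. With `ℓ = 2k`, this subgraph has no cycle of length at most `2k`, so its paths of
length `k` ending at a fixed vertex, at least `(δ - 1)^k` of them, start at distinct vertices
(Moore's bound). Hence `n ≥ (d / 2 - 1)^k ≥ (d / 4)^k`, that is, `2 n^{1/ℓ} / √d ≥ 1`.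
-/

open Finset

section SchurTest

variable {ι : Type*} [Fintype ι]

lemma sq_sum_mul_le_sum_mul_mul_sum_div {a h y : ι → ℝ} (ha : ∀ j, 0 ≤ a j)
    (hh : ∀ j, 0 < h j) :
    (∑ j, a j * y j) ^ 2 ≤ (∑ j, a j * h j) * ∑ j, a j / h j * y j ^ 2 :=
  sum_sq_le_sum_mul_sum_of_sq_le_mul _ (fun j _ => mul_nonneg (ha j) (hh j).le)
    (fun j _ => by have := ha j; have := hh j; positivity)
    (fun j _ => le_of_eq (by field_simp [(hh j).ne']))

lemma sum_sq_mulVec_le_of_schur_test {M : Matrix ι ι ℝ} (hM : ∀ i j, 0 ≤ M i j)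
    {h : ι → ℝ} (hh : ∀ i, 0 < h i) {c : ℝ} (hc : 0 ≤ c)
    (hrow : ∀ i, ∑ j, M i j * h j ≤ c * h i)
    (hcol : ∀ j, ∑ i, M i j * h i ≤ c * h j) (y : ι → ℝ) :
    ∑ i, (M *ᵥ y) i ^ 2 ≤ c ^ 2 * ∑ j, y j ^ 2 :=
  calc ∑ i, (M *ᵥ y) i ^ 2
      ≤ ∑ i, c * h i * ∑ j, M i j / h j * y j ^ 2 := by
        gcongr with i
        refine (sq_sum_mul_le_sum_mul_mul_sum_div (hM i) hh).trans ?_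
        gcongr
        · exact sum_nonneg fun j _ => by have := hM i j; have := hh j; positivity
        · exact hrow i
    _ = ∑ i, ∑ j, c * h i * (M i j / h j * y j ^ 2) := sum_congr rfl fun i _ => mul_sum _ _ _
    _ = c * ∑ j, (∑ i, M i j * h i) * (y j ^ 2 / h j) := by
        rw [sum_comm, mul_sum]
        refine sum_congr rfl fun j _ => ?_
        rw [sum_mul, mul_sum]
        refine sum_congr rfl fun i _ => ?_
        field_simp [(hh j).ne']
    _ ≤ c * ∑ j, c * h j * (y j ^ 2 / h j) := by
        gcongr with j
        · exact div_nonneg (sq_nonneg _) (hh j).le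
        · exact hcol j
    _ = c ^ 2 * ∑ j, y j ^ 2 := by
        rw [mul_sum, mul_sum]
        refine sum_congr rfl fun j _ => ?_
        field_simp [(hh j).ne']

theorem specNorm_le_of_schur_test [DecidableEq ι] {M : Matrix ι ι ℝ}
    (hM : ∀ i j, 0 ≤ M i j) {h : ι → ℝ} (hh : ∀ i, 0 < h i) {c : ℝ} (hc : 0 ≤ c)
    (hrow : ∀ i, ∑ j, M i j * h j ≤ c * h i) (hcol : ∀ j, ∑ i, M i j * h i ≤ c * h j) :
    specNorm M ≤ c := by
  refine ContinuousLinearMap.opNorm_le_bound _ hc fun x => ?_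
  refine le_of_sq_le_sq ?_ (by positivity)
  rw [mul_pow, EuclideanSpace.real_norm_sq_eq, EuclideanSpace.real_norm_sq_eq]
  exact sum_sq_mulVec_le_of_schur_test hM hh hc hrow hcol x

end SchurTest

section NormalizedAdjacency

variable {ι : Type*} [Fintype ι] [DecidableEq ι]

lemma specNorm_diagonal_rpow_mul_mul_diagonal_rpow_le {A : Matrix ι ι ℝ} (hA : A.IsSymm)
    (hA0 : ∀ i j, 0 ≤ A i j) {γ : ι → ℝ} (hγ : ∀ i, 0 < γ i) {c : ℝ} (hc : 0 ≤ c)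
    (hrow : ∀ i, ∑ j, A i j ≤ c * γ i) :
    specNorm (diagonal (fun i => γ i ^ (-(1 / 2) : ℝ)) * A *
      diagonal (fun i => γ i ^ (-(1 / 2) : ℝ))) ≤ c := by
  set g : ι → ℝ := fun i => γ i ^ (-(1 / 2) : ℝ)
  set h : ι → ℝ := fun i => γ i ^ (1 / 2 : ℝ)
  have hg : ∀ i, 0 < g i := fun i => Real.rpow_pos_of_pos (hγ i) _
  have hgh : ∀ i, g i * h i = 1 := fun i => by
    rw [← Real.rpow_add (hγ i)]; norm_num
  have hgγ : ∀ i, g i * γ i = h i := fun i => by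
    rw [← Real.rpow_add_one (hγ i).ne']; norm_num [h]
  have hrow' : ∀ i, ∑ j, g i * A i j * g j * h j ≤ c * h i := fun i =>
    calc ∑ j, g i * A i j * g j * h j = g i * ∑ j, A i j := by
          rw [mul_sum]
          exact sum_congr rfl fun j _ => by rw [mul_assoc, hgh, mul_one]
      _ ≤ g i * (c * γ i) := mul_le_mul_of_nonneg_left (hrow i) (hg i).le
      _ = c * h i := by rw [← hgγ]; ring
  refine specNorm_le_of_schur_test (h := h) (fun i j => ?_)
    (fun i => Real.rpow_pos_of_pos (hγ i) _) hc (fun i => ?_) (fun j => ?_)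
  · rw [mul_diagonal, diagonal_mul]
    exact mul_nonneg (mul_nonneg (hg i).le (hA0 i j)) (hg j).le
  · simpa only [mul_diagonal, diagonal_mul] using hrow' i
  · calc ∑ i, (diagonal g * A * diagonal g) i j * h i = ∑ i, g j * A j i * g i * h i :=
          sum_congr rfl fun i _ => by rw [mul_diagonal, diagonal_mul, ← hA.apply i j]; ring
      _ ≤ c * h j := hrow' j

end NormalizedAdjacency

namespace SimpleGraph

section Subgraphs

variable {V : Type*} {G : SimpleGraph V}

lemma Walk.IsPath.exists_isCycle_of_adj_of_mem_support {u v w : V} {p : G.Walk w v}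
    (hp : p.IsPath) (hadj : G.Adj w u) (hsnd : u ≠ p.snd) (hu : u ∈ p.support) :
    ∃ c : G.Walk u u, c.IsCycle ∧ c.length ≤ p.length + 1 := by
  classical
  have hq := hp.takeUntil hu
  have hedge : s(u, w) ∉ (p.takeUntil u hu).edges := fun he => by
    have hlen := hq.length_eq_one_of_mem_edges (Sym2.eq_swap ▸ he)
    exact hsnd (hlen ▸ p.getVert_length_takeUntil hu).symm
  refine ⟨_, Path.cons_isCycle ⟨_, hq⟩ hadj.symm hedge, ?_⟩
  simpa using p.length_takeUntil_le_length hu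

/-- The union of two distinct paths with the same ends is not a forest, and a cycle in it uses
each of their edges at most once. -/
lemma Walk.exists_isCycle_of_isPath_of_ne {v w : V} {p q : G.Walk v w} (hp : p.IsPath)
    (hq : q.IsPath) (hne : p ≠ q) :
    ∃ (u : V) (c : G.Walk u u), c.IsCycle ∧ c.length ≤ p.length + q.length := by
  classical
  set H := fromEdgeSet {e | e ∈ p.edges ∨ e ∈ q.edges}
  have hHG : H ≤ G := fun a b hab => by
    rcases (fromEdgeSet_adj _).1 hab with ⟨he | he, -⟩
    exacts [p.edges_subset_edgeSet he, q.edges_subset_edgeSet he]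
  have hpH : ∀ e ∈ p.edges, e ∈ H.edgeSet := fun e he => by
    rw [edgeSet_fromEdgeSet]
    exact ⟨Or.inl he, not_isDiag_of_mem_edgeSet G (p.edges_subset_edgeSet he)⟩
  have hqH : ∀ e ∈ q.edges, e ∈ H.edgeSet := fun e he => by
    rw [edgeSet_fromEdgeSet]
    exact ⟨Or.inr he, not_isDiag_of_mem_edgeSet G (q.edges_subset_edgeSet he)⟩
  have hmapLe : ∀ (r : G.Walk v w) hr, (r.transfer H hr).mapLe hHG = r := fun r hr => by
    rw [Walk.mapLe, ← transfer_eq_map_ofLE, transfer_transfer, transfer_self]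
    simpa using r.edges_subset_edgeSet
  have hcyclic : ¬ H.IsAcyclic := fun hac => hne <| by
    rw [← hmapLe p hpH, ← hmapLe q hqH]
    congr 1
    exact congrArg Subtype.val
      ((hac.subsingleton_path v w).elim ⟨_, hp.transfer hpH⟩ ⟨_, hq.transfer hqH⟩)
  obtain ⟨u, c, hc⟩ : ∃ (u : V) (c : H.Walk u u), c.IsCycle := by
    simpa [IsAcyclic] using hcyclic
  refine ⟨u, c.mapLe hHG, hc.mapLe hHG, ?_⟩
  have hsub : c.edges.toFinset ⊆ (p.edges ++ q.edges).toFinset := fun e he => by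
    have := c.edges_subset_edgeSet (List.mem_toFinset.1 he)
    rw [edgeSet_fromEdgeSet] at this
    simpa using this.1
  calc (c.mapLe hHG).length = c.edges.toFinset.card := by
        rw [Walk.length_mapLe, List.toFinset_card_of_nodup hc.edges_nodup, Walk.length_edges]
    _ ≤ (p.edges ++ q.edges).length :=
        (Finset.card_le_card hsub).trans (List.toFinset_card_le _)
    _ = p.length + q.length := by simp

lemma forall_isCycle_lt_length_induce {L : ℕ}
    (h : ∀ (u : V) (c : G.Walk u u), c.IsCycle → L < c.length) (s : Set V) :
    ∀ (u : s) (c : (G.induce s).Walk u u), c.IsCycle → L < c.length := fun u c hc => by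
  have := h _ _ ((Walk.isCycle_map_iff_of_injective
    (f := (Embedding.induce (G := G) s).toHom) Subtype.val_injective).2 hc)
  rwa [Walk.length_map] at this

lemma degree_induce_eq_card_filter_adj [Fintype V] [DecidableRel G.Adj] (t : Finset V) (v : t) :
    (G.induce (t : Set V)).degree v = #{w ∈ t | G.Adj v w} := by
  rw [← card_neighborSet_eq_degree, ← Set.toFinset_card,
    ← card_map (Function.Embedding.subtype _)]
  congr 1
  ext w
  simp [and_comm]

lemma sum_card_filter_adj_insert [DecidableEq V] [DecidableRel G.Adj] {s : Finset V} {v : V}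
    (hv : v ∉ s) :
    ∑ u ∈ insert v s, #{w ∈ insert v s | G.Adj u w} =
      2 * #{w ∈ s | G.Adj v w} + ∑ u ∈ s, #{w ∈ s | G.Adj u w} := by
  simp only [card_filter, sum_insert hv, G.irrefl, if_false, zero_add, sum_add_distrib,
    G.adj_comm _ v]
  ring

end Subgraphs

variable {V : Type*} [Fintype V] [DecidableEq V] (G : SimpleGraph V) [DecidableRel G.Adj]

theorem specNorm_normalizedAdjMatrix_lt_one {d : ℝ} (hd : 0 < d) :
    specNorm (diagonal (fun v => ((G.degree v : ℝ) + d) ^ (-(1 / 2) : ℝ)) * G.adjMatrix ℝ *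
      diagonal (fun v => ((G.degree v : ℝ) + d) ^ (-(1 / 2) : ℝ))) < 1 := by
  have hΔ : (0 : ℝ) < G.maxDegree + d := by positivity
  refine (specNorm_diagonal_rpow_mul_mul_diagonal_rpow_le (c := G.maxDegree / (G.maxDegree + d))
    (isSymm_adjMatrix G) (fun u v => ?_) (fun v => by positivity) (by positivity)
    (fun u => ?_)).trans_lt ((div_lt_one hΔ).2 (by linarith))
  · rw [adjMatrix_apply]; split_ifs <;> norm_num
  · have hdeg : (G.degree u : ℝ) ≤ G.maxDegree := by exact_mod_cast G.degree_le_maxDegree u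
    rw [div_mul_eq_mul_div, le_div_iff₀ hΔ]
    simp only [adjMatrix_apply, sum_boole]
    rw [← neighborFinset_eq_filter, card_neighborFinset_eq_degree]
    nlinarith [mul_le_mul_of_nonneg_right hdeg hd.le]

def pathsTo (v : V) (j : ℕ) : Finset (Σ u, G.Walk u v) :=
  univ.sigma fun u => {p ∈ G.finsetWalkLength j u v | p.IsPath}

variable {G}

@[simp]
lemma mem_pathsTo {v : V} {j : ℕ} {x : Σ u, G.Walk u v} :
    x ∈ G.pathsTo v j ↔ x.2.IsPath ∧ x.2.length = j := by
  simp [pathsTo, mem_finsetWalkLength_iff, and_comm]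

lemma card_pathsTo_le_card {v : V} {k : ℕ}
    (hgirth : ∀ (u : V) (c : G.Walk u u), c.IsCycle → 2 * k < c.length) :
    #(G.pathsTo v k) ≤ Fintype.card V := by
  refine card_le_card_of_injOn Sigma.fst (fun _ _ => mem_univ _) ?_
  rintro ⟨u, p⟩ hp ⟨u', q⟩ hq (rfl : u = u')
  simp only [mem_coe, mem_pathsTo] at hp hq
  by_contra hne
  obtain ⟨w, c, hc, hlen⟩ :=
    Walk.exists_isCycle_of_isPath_of_ne (p := p) (q := q) hp.1 hq.1 fun hpq => hne (hpq ▸ rfl)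
  have := hgirth w c hc
  omega

lemma mul_card_pathsTo_le_card_pathsTo_succ {v : V} {j : ℕ}
    (hgirth : ∀ (u : V) (c : G.Walk u u), c.IsCycle → j + 1 < c.length) :
    (G.minDegree - 1) * #(G.pathsTo v j) ≤ #(G.pathsTo v (j + 1)) :=
  calc (G.minDegree - 1) * #(G.pathsTo v j)
      ≤ ∑ x ∈ G.pathsTo v j, #((G.neighborFinset x.1).erase x.2.snd) := by
        rw [mul_comm, ← smul_eq_mul, ← sum_const]
        refine sum_le_sum fun x _ => (Nat.sub_le_sub_right ?_ 1).trans pred_card_le_card_erase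
        rw [card_neighborFinset_eq_degree]
        exact G.minDegree_le_degree x.1
    _ = #((G.pathsTo v j).sigma fun x => (G.neighborFinset x.1).erase x.2.snd) :=
        (card_sigma _ _).symm
    _ ≤ #(G.pathsTo v (j + 1)) := by
        -- deleting the first vertex maps the paths of length `j + 1` onto these pairs
        refine card_le_card_of_surjOn (fun y => ⟨⟨y.2.snd, y.2.tail⟩, y.1⟩) ?_
        rintro ⟨⟨w, p⟩, u⟩ hmem
        simp only [coe_sigma, Set.mem_sigma_iff, mem_coe, mem_pathsTo, mem_erase,
          mem_neighborFinset] at hmem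
        obtain ⟨⟨hp, hlen⟩, hsnd, hadj⟩ := hmem
        have hu : u ∉ p.support := fun hu => by
          obtain ⟨c, hc, hclen⟩ := hp.exists_isCycle_of_adj_of_mem_support hadj hsnd hu
          have := hgirth u c hc
          omega
        refine ⟨⟨u, .cons hadj.symm p⟩, ?_, ?_⟩
        · simp [Walk.cons_isPath_iff, hp, hu, hlen]
        · have copy_heq : ∀ {a b : V} (e : a = b) (q : G.Walk a v), q.copy e rfl ≍ q := by
            rintro a b rfl q
            rfl
          simp [Walk.tail_cons, copy_heq]

theorem minDegree_sub_one_pow_le_card [Nonempty V] {k : ℕ}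
    (hgirth : ∀ (u : V) (c : G.Walk u u), c.IsCycle → 2 * k < c.length) :
    (G.minDegree - 1) ^ k ≤ Fintype.card V := by
  obtain ⟨v⟩ := ‹Nonempty V›
  have hcount : ∀ j ≤ k, (G.minDegree - 1) ^ j ≤ #(G.pathsTo v j) := by
    intro j hj
    induction j with
    | zero => exact card_pos.2 ⟨⟨v, .nil⟩, by simp⟩
    | succ j ih =>
      rw [pow_succ']
      exact (Nat.mul_le_mul_left _ (ih (by omega))).trans
        (mul_card_pathsTo_le_card_pathsTo_succ fun u c hc => by have := hgirth u c hc; omega)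
  exact (hcount k le_rfl).trans (card_pathsTo_le_card hgirth)

lemma exists_nonempty_forall_half_le_card_filter_adj [Nonempty V] {d : ℝ}
    (hsum : d * Fintype.card V ≤ ∑ v, (G.degree v : ℝ)) :
    ∃ t : Finset V, t.Nonempty ∧ ∀ v ∈ t, d / 2 ≤ #{w ∈ t | G.Adj v w} := by
  set F := {s ∈ (univ : Finset V).powerset |
    s.Nonempty ∧ d * #s ≤ ∑ u ∈ s, (#{w ∈ s | G.Adj u w} : ℝ)}
  have huniv : univ ∈ F := by
    simpa [F, ← neighborFinset_eq_filter, card_neighborFinset_eq_degree] using hsum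
  obtain ⟨t, ht⟩ := exists_minimal ⟨univ, huniv⟩
  have htF := (mem_filter.1 ht.prop).2
  refine ⟨t, htF.1, fun v hv => ?_⟩
  by_contra! hlt
  have hdel := sum_card_filter_adj_insert (G := G) (notMem_erase v t)
  rw [insert_erase hv] at hdel
  have hdeg : #{w ∈ t.erase v | G.Adj v w} ≤ #{w ∈ t | G.Adj v w} :=
    card_le_card (filter_subset_filter _ (erase_subset v t))
  have hlarge : d * #(t.erase v) < ∑ u ∈ t.erase v, (#{w ∈ t.erase v | G.Adj u w} : ℝ) := by
    have hdel' : (∑ u ∈ t, #{w ∈ t | G.Adj u w} : ℝ) =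
        2 * #{w ∈ t.erase v | G.Adj v w} +
          ∑ u ∈ t.erase v, (#{w ∈ t.erase v | G.Adj u w} : ℝ) := by
      exact_mod_cast hdel
    have hdeg' : (#{w ∈ t.erase v | G.Adj v w} : ℝ) ≤ #{w ∈ t | G.Adj v w} := by
      exact_mod_cast hdeg
    rw [cast_card_erase_of_mem hv]
    linarith [htF.2]
  have hne : (t.erase v).Nonempty := by
    by_contra hempty
    rw [not_nonempty_iff_eq_empty.1 hempty] at hlarge
    simp at hlarge
  exact ht.not_prop_of_lt (erase_ssubset hv)
    (mem_filter.2 ⟨mem_powerset.2 (subset_univ _), hne, hlarge.le⟩)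

lemma exists_half_le_minDegree_induce [Nonempty V] {d : ℝ}
    (hsum : d * Fintype.card V ≤ ∑ v, (G.degree v : ℝ)) :
    ∃ t : Finset V, t.Nonempty ∧ d / 2 ≤ (G.induce (t : Set V)).minDegree := by
  obtain ⟨t, ht, hdeg⟩ := exists_nonempty_forall_half_le_card_filter_adj hsum
  have := ht.coe_sort
  obtain ⟨v, hv⟩ := (G.induce (t : Set V)).exists_minimal_degree_vertex
  refine ⟨t, ht, ?_⟩
  rw [hv, degree_induce_eq_card_filter_adj]
  exact hdeg v v.2

theorem div_four_pow_le_card_of_girth [Nonempty V] {d : ℝ} {k : ℕ} (hd : 4 ≤ d)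
    (hsum : d * Fintype.card V ≤ ∑ v, (G.degree v : ℝ))
    (hgirth : ∀ (u : V) (c : G.Walk u u), c.IsCycle → 2 * k < c.length) :
    (d / 4) ^ k ≤ Fintype.card V := by
  obtain ⟨t, ht, hmin⟩ := exists_half_le_minDegree_induce hsum
  have := ht.coe_sort
  set H := G.induce (t : Set V)
  have hmin1 : 1 ≤ H.minDegree := Nat.one_le_cast (α := ℝ).1 (by linarith)
  calc (d / 4) ^ k ≤ ((H.minDegree - 1 : ℕ) : ℝ) ^ k := by
        gcongr
        rw [Nat.cast_sub hmin1]
        push_cast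
        linarith
    _ ≤ Fintype.card V := by
        exact_mod_cast (H.minDegree_sub_one_pow_le_card
          (forall_isCycle_lt_length_induce hgirth _)).trans (Fintype.card_subtype_le _)

end SimpleGraph

lemma sqrt_le_rpow_one_div_two_mul_of_pow_le {x y : ℝ} {k : ℕ} (hx : 0 ≤ x) (hk : k ≠ 0)
    (h : x ^ k ≤ y) : √x ≤ y ^ ((1 : ℝ) / (2 * k)) := by
  have hk' : (k : ℝ) ≠ 0 := Nat.cast_ne_zero.2 hk
  calc √x = (x ^ k) ^ ((1 : ℝ) / (2 * k)) := by
        rw [Real.sqrt_eq_rpow, ← Real.rpow_natCast, ← Real.rpow_mul hx]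
        field_simp
    _ ≤ y ^ ((1 : ℝ) / (2 * k)) := by gcongr

/-- If `G` is a graph on `n` vertices with average degree `d > 16` and no cycle of length at
most `ℓ` (`ℓ` even), then writing `Γ = D + d·Id`, the spectral norm of `Γ^{-1/2} A Γ^{-1/2}`
is strictly less than `2 n^{1/ℓ} / √d`. -/
theorem weak_moore_norm_bound (n ℓ : ℕ) (hn : 0 < n) (hℓeven : Even ℓ) (hℓpos : 0 < ℓ)
    (G : SimpleGraph (Fin n)) [DecidableRel G.Adj]
    (d : ℝ) (hd : d = (∑ v, (G.degree v : ℝ)) / n) (hd16 : 16 < d)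
    (hgirth : ∀ (u : Fin n) (c : G.Walk u u), c.IsCycle → ℓ < c.length) :
    specNorm
      (Matrix.diagonal (fun v => ((G.degree v : ℝ) + d) ^ (-(1 / 2) : ℝ)) *
        G.adjMatrix ℝ *
        Matrix.diagonal (fun v => ((G.degree v : ℝ) + d) ^ (-(1 / 2) : ℝ)))
      < 2 * (n : ℝ) ^ ((1 : ℝ) / ℓ) / Real.sqrt d := by
  obtain ⟨k, rfl⟩ := hℓeven
  have hd0 : 0 < d := by linarith
  have : Nonempty (Fin n) := ⟨⟨0, hn⟩⟩
  have hsum : d * Fintype.card (Fin n) ≤ ∑ v, (G.degree v : ℝ) := by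
    rw [hd, Fintype.card_fin, div_mul_cancel₀ _ (by positivity)]
  have hpow : (d / 4) ^ k ≤ n := by
    simpa using G.div_four_pow_le_card_of_girth (by linarith) hsum (by simpa [two_mul] using hgirth)
  have hroot := sqrt_le_rpow_one_div_two_mul_of_pow_le (by positivity) (by omega) hpow
  rw [Real.sqrt_div' _ (by norm_num), show √(4 : ℝ) = 2 by norm_num] at hroot
  calc specNorm _ < 1 := G.specNorm_normalizedAdjMatrix_lt_one hd0
    _ ≤ _ := by
        rw [le_div_iff₀ (Real.sqrt_pos.2 hd0), one_mul]
        push_cast [← two_mul]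
        linarith
end

section
/- Every graph with n vertices and average degree d > 16 contains a cycle of length at most 2·⌈log_{d/16} n⌉. -/
/-!
Let `e(S)` count the ordered pairs of adjacent vertices in `S` and let `c = d / 16`. Since the
average degree exceeds `2(c + 1)`, a set `S` maximising `e(S) - 2(c + 1)|S|` is nonempty, and
comparing it with `S` minus a vertex shows that every vertex of `S` has at least `c + 1`
neighbours in `S`. Let `δ ≥ c + 1` be the minimum degree of the graph induced on `S`. If it had no
cycle of length at most `2k`, the distance layers around a vertex would grow by a factor `δ - 1`
up to radius `k`: a vertex of layer `i < k` has at most one neighbour in layers `≤ i`, and no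
vertex of layer `i + 1` has two neighbours in layer `i`, since either would close a cycle of
length at most `2i + 2`. Hence `n ≥ |S| > (δ - 1)^k ≥ c^k`, which fails for
`k = ⌈log_c n⌉`.
-/

open Finset

namespace SimpleGraph

variable {V : Type*} {G : SimpleGraph V}

lemma egirth_le_length_add_one {u v : V} (h : G.Adj u v) (p : G.Walk v u)
    (hp : s(u, v) ∉ p.edges) : G.egirth ≤ p.length + 1 := by
  classical
  have hc : (Walk.cons h p.bypass).IsCycle :=
    Path.cons_isCycle p.toPath h fun he ↦ hp (p.edges_bypass_subset_edges he)
  calc G.egirth ≤ (Walk.cons h p.bypass).length := egirth_le_length hc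
    _ ≤ p.length + 1 := by simpa using p.length_bypass_le_length

lemma egirth_le_length_add_length_add_two {v u w₁ w₂ : V} (h₁ : G.Adj u w₁) (h₂ : G.Adj u w₂)
    (hne : w₁ ≠ w₂) (p₁ : G.Walk v w₁) (p₂ : G.Walk v w₂) (hu₁ : u ∉ p₁.support)
    (hu₂ : u ∉ p₂.support) : G.egirth ≤ p₁.length + p₂.length + 2 := by
  have hq : s(u, w₁) ∉ (p₁.reverse.append (p₂.concat h₂.symm)).edges := by
    simp only [Walk.edges_append, Walk.edges_reverse, Walk.edges_concat, List.concat_eq_append,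
      List.mem_append, List.mem_reverse, List.mem_singleton, Sym2.eq_iff, not_or]
    refine ⟨fun he ↦ hu₁ (p₁.fst_mem_support_of_mem_edges he),
      fun he ↦ hu₂ (p₂.fst_mem_support_of_mem_edges he), ?_⟩
    grind [h₁.ne]
  refine (egirth_le_length_add_one h₁ _ hq).trans_eq ?_
  simp only [Walk.length_append, Walk.length_reverse, Walk.length_concat]
  push_cast
  ring

lemma Walk.eq_of_mem_support_of_length_le_edist [DecidableEq V] {v w u : V} (p : G.Walk v w)
    (hu : u ∈ p.support) (h : p.length ≤ G.edist v u) : u = w := by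
  have hsplit := congrArg Walk.length (p.take_spec hu)
  have htake : G.edist v u ≤ (p.takeUntil u hu).length := edist_le _
  rw [Walk.length_append] at hsplit
  have hdrop : (p.dropUntil u hu).length = 0 := by
    have := h.trans htake
    norm_cast at this
    omega
  exact Walk.eq_of_length_eq_zero hdrop

lemma exists_walk_length_le_of_edist_le {v w : V} {i : ℕ} (h : G.edist v w ≤ i) :
    ∃ p : G.Walk v w, p.length ≤ i := by
  obtain ⟨p, hp⟩ := exists_walk_of_edist_ne_top (ne_top_of_le_ne_top (ENat.natCast_ne_top i) h)
  exact ⟨p, by exact_mod_cast hp ▸ h⟩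

variable [Fintype V] [DecidableRel G.Adj]

lemma card_filter_edist_le_le_one [DecidableEq V] {v u : V} {i : ℕ}
    (hg : 2 * i + 2 < G.egirth) (hu : i ≤ G.edist v u) :
    #{w ∈ G.neighborFinset u | G.edist v w ≤ i} ≤ 1 := by
  refine card_le_one.mpr fun w₁ hw₁ w₂ hw₂ ↦ by_contra fun hne ↦ ?_
  simp only [mem_filter, mem_neighborFinset] at hw₁ hw₂
  obtain ⟨p₁, hp₁⟩ := exists_walk_length_le_of_edist_le hw₁.2
  obtain ⟨p₂, hp₂⟩ := exists_walk_length_le_of_edist_le hw₂.2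
  have hu₁ : u ∉ p₁.support := fun h ↦
    hw₁.1.ne (p₁.eq_of_mem_support_of_length_le_edist h (le_trans (by exact_mod_cast hp₁) hu))
  have hu₂ : u ∉ p₂.support := fun h ↦
    hw₂.1.ne (p₂.eq_of_mem_support_of_length_le_edist h (le_trans (by exact_mod_cast hp₂) hu))
  have hcycle := egirth_le_length_add_length_add_two hw₁.1 hw₂.1 hne p₁ p₂ hu₁ hu₂
  have hshort : (p₁.length + p₂.length + 2 : ℕ∞) ≤ 2 * i + 2 := by
    norm_cast
    omega
  exact (hshort.trans_lt hg).not_ge hcycle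

lemma minDegree_sub_one_mul_card_le [DecidableEq V] (v : V) {i : ℕ} (hg : 2 * i + 2 < G.egirth) :
    (G.minDegree - 1) * #{w | G.edist v w = i} ≤ #{w | G.edist v w = i + 1} := by
  rw [mul_comm, ← mul_one #{w | G.edist v w = i + 1}]
  refine card_mul_le_card_mul G.Adj (fun u hu ↦ ?_) (fun w hw ↦ ?_)
  · simp only [mem_filter, mem_univ, true_and] at hu
    have hcover : G.neighborFinset u ⊆
        bipartiteAbove G.Adj {w | G.edist v w = i + 1} u ∪
          {w ∈ G.neighborFinset u | G.edist v w ≤ i} := by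
      intro w hw
      have hle : G.edist v w ≤ i + 1 := by
        calc G.edist v w ≤ G.edist v u + G.edist u w := G.edist_triangle
          _ = i + 1 := by rw [hu, edist_eq_one_iff_adj.mpr ((mem_neighborFinset _ _ _).mp hw)]
      rcases hle.eq_or_lt with h | h
      · simp_all [bipartiteAbove]
      · simp_all [ENat.lt_add_one_iff]
    have hdeg : G.degree u ≤ #(bipartiteAbove G.Adj {w | G.edist v w = i + 1} u) + 1 := by
      rw [← card_neighborFinset_eq_degree]
      grw [card_le_card hcover, card_union_le, card_filter_edist_le_le_one hg hu.ge]
    have := G.minDegree_le_degree u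
    omega
  · simp only [mem_filter, mem_univ, true_and] at hw
    refine (card_le_card fun u hu ↦ ?_).trans
      (card_filter_edist_le_le_one (u := w) hg (by rw [hw]; exact le_self_add))
    simp_all [bipartiteBelow, adj_comm]

theorem minDegree_sub_one_pow_lt_card [Nonempty V] {k : ℕ} (hk : 0 < k)
    (hg : 2 * k < G.egirth) : (G.minDegree - 1) ^ k < Fintype.card V := by
  classical
  obtain ⟨v⟩ := ‹Nonempty V›
  have hlayer : ∀ i ≤ k, (G.minDegree - 1) ^ i ≤ #{w | G.edist v w = i} := by
    intro i hi
    induction i with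
    | zero => exact one_le_card.mpr ⟨v, by simp⟩
    | succ i ih =>
      have hgi : 2 * i + 2 < G.egirth := lt_of_le_of_lt (by norm_cast; omega) hg
      calc (G.minDegree - 1) ^ (i + 1) = (G.minDegree - 1) * (G.minDegree - 1) ^ i := pow_succ' ..
        _ ≤ (G.minDegree - 1) * #{w | G.edist v w = i} := Nat.mul_le_mul_left _ (ih (by omega))
        _ ≤ _ := minDegree_sub_one_mul_card_le v hgi
  refine (hlayer k le_rfl).trans_lt (card_lt_univ_of_notMem (x := v) ?_)
  simpa [eq_comm] using hk.ne'

lemma card_filter_adj_eq_sum_degree : #{p : V × V | G.Adj p.1 p.2} = ∑ v, G.degree v := by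
  rw [card_filter, Fintype.sum_prod_type]
  refine sum_congr rfl fun v _ ↦ ?_
  rw [← card_neighborFinset_eq_degree, neighborFinset_eq_filter, card_filter]

variable [DecidableEq V]

lemma card_filter_adj_product_le_erase {S : Finset V} {v : V} (hv : v ∈ S) :
    #{p ∈ S ×ˢ S | G.Adj p.1 p.2} ≤
      #{p ∈ S.erase v ×ˢ S.erase v | G.Adj p.1 p.2} + 2 * #(G.neighborFinset v ∩ S) := by
  have hsub : {p ∈ S ×ˢ S | G.Adj p.1 p.2} ⊆ {p ∈ S.erase v ×ˢ S.erase v | G.Adj p.1 p.2} ∪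
      (G.neighborFinset v ∩ S).image (v, ·) ∪ (G.neighborFinset v ∩ S).image (·, v) := by
    rintro ⟨a, b⟩ hab
    simp only [mem_filter, mem_product] at hab
    by_cases ha : a = v <;> by_cases hb : b = v <;> simp_all [adj_comm]
  grw [card_le_card hsub, card_union_le, card_union_le, card_image_le, card_image_le]
  omega

theorem exists_nonempty_forall_le_card_neighborFinset_inter {c : ℝ}
    (h : 2 * c * Fintype.card V < ∑ v, (G.degree v : ℝ)) :
    ∃ S : Finset V, S.Nonempty ∧ ∀ v ∈ S, c ≤ #(G.neighborFinset v ∩ S) := by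
  let g : Finset V → ℝ := fun S ↦ #{p ∈ S ×ˢ S | G.Adj p.1 p.2} - 2 * c * #S
  obtain ⟨S, -, hS⟩ := exists_max_image univ g univ_nonempty
  refine ⟨S, nonempty_iff_ne_empty.2 ?_, fun v hv ↦ ?_⟩
  · rintro rfl
    have hmax := hS univ (mem_univ _)
    simp only [g, univ_product_univ, card_filter_adj_eq_sum_degree, Nat.cast_sum, card_univ,
      product_empty, filter_empty, card_empty, CharP.cast_eq_zero, mul_zero, sub_self,
      tsub_le_iff_right, zero_add] at hmax
    linarith
  · have hmax := hS (S.erase v) (mem_univ _)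
    have hle : (#{p ∈ S ×ˢ S | G.Adj p.1 p.2} : ℝ) ≤
        #{p ∈ S.erase v ×ˢ S.erase v | G.Adj p.1 p.2} + 2 * #(G.neighborFinset v ∩ S) :=
      mod_cast card_filter_adj_product_le_erase hv
    simp only [g, cast_card_erase_of_mem hv] at hmax
    linarith

lemma degree_induce_eq_card_neighborFinset_inter (S : Finset V) (v : (S : Set V)) :
    (G.induce (S : Set V)).degree v = #(G.neighborFinset v ∩ S) := by
  have h := congrArg card (G.map_neighborFinset_induce (s := (S : Set V)) v)
  rw [card_map, card_neighborFinset_eq_degree, Finset.toFinset_coe] at h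
  convert h using 2

theorem exists_nonempty_le_minDegree_induce {c : ℝ}
    (h : 2 * c * Fintype.card V < ∑ v, (G.degree v : ℝ)) :
    ∃ S : Finset V, S.Nonempty ∧ c ≤ (G.induce (S : Set V)).minDegree := by
  obtain ⟨S, hS, hdeg⟩ := exists_nonempty_forall_le_card_neighborFinset_inter h
  have : Nonempty (S : Set V) := hS.to_subtype
  obtain ⟨v, hv⟩ := (G.induce (S : Set V)).exists_minimal_degree_vertex
  refine ⟨S, hS, ?_⟩
  rw [hv, degree_induce_eq_card_neighborFinset_inter]
  exact hdeg v v.2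

theorem egirth_le_two_mul_natCeil_logb {c : ℝ} (hc : 1 < c)
    (hdeg : 2 * (c + 1) * Fintype.card V < ∑ v, (G.degree v : ℝ)) :
    G.egirth ≤ 2 * ⌈Real.logb c (Fintype.card V)⌉₊ := by
  set k := ⌈Real.logb c (Fintype.card V)⌉₊
  obtain ⟨S, hS, hδ⟩ := G.exists_nonempty_le_minDegree_induce hdeg
  set H := G.induce (S : Set V)
  have : Nonempty (S : Set V) := hS.to_subtype
  have hcardH : Fintype.card (S : Set V) ≤ Fintype.card V := by simpa using S.card_le_univ
  have hδ' : c ≤ ((H.minDegree - 1 : ℕ) : ℝ) := by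
    rw [Nat.cast_sub (by exact_mod_cast (by linarith : (1 : ℝ) ≤ c + 1).trans hδ)]
    push_cast
    linarith
  have hcard : (1 : ℝ) < Fintype.card V := by
    have : (H.minDegree : ℝ) < Fintype.card V := by
      exact_mod_cast H.minDegree_lt_card.trans_le hcardH
    linarith
  have hk : 0 < k := Nat.ceil_pos.mpr (Real.logb_pos hc hcard)
  have hck : (Fintype.card V : ℝ) ≤ c ^ k := by
    simpa using (Real.logb_le_iff_le_rpow hc (by linarith)).mp (Nat.le_ceil _)
  by_contra! hg
  have hmoore : ((H.minDegree - 1 : ℕ) : ℝ) ^ k < Fintype.card V := by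
    exact_mod_cast (H.minDegree_sub_one_pow_lt_card hk
      (hg.trans_le (Copy.induce G _).isContained.egirth_le)).trans_le hcardH
  have := pow_le_pow_left₀ (by linarith) hδ' k
  linarith

end SimpleGraph

open SimpleGraph

/-- Every graph on `n ≥ 1` vertices with average degree `d > 16` contains a cycle of length
at most `2⌈log_{d/16} n⌉`. -/
theorem weak_moore_bound (n : ℕ) (hn : 0 < n) (G : SimpleGraph (Fin n)) [DecidableRel G.Adj]
    (d : ℝ) (hd : d = (∑ v, (G.degree v : ℝ)) / n) (hd16 : 16 < d) :
    ∃ (u : Fin n) (c : G.Walk u u), c.IsCycle ∧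
      c.length ≤ 2 * ⌈Real.logb (d / 16) n⌉₊ := by
  have hsum : ∑ v, (G.degree v : ℝ) = d * n := by
    rw [hd, div_mul_cancel₀ _ (by positivity)]
  have hdeg : 2 * (d / 16 + 1) * Fintype.card (Fin n) < ∑ v, (G.degree v : ℝ) := by
    rw [hsum, Fintype.card_fin]
    nlinarith [(Nat.cast_pos.mpr hn : (0 : ℝ) < n)]
  have hg := G.egirth_le_two_mul_natCeil_logb (by linarith) hdeg
  rw [Fintype.card_fin] at hg
  obtain ⟨u, c, hc, hlen⟩ := (exists_egirth_eq_length (G := G)).mpr fun hG ↦ by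
    rw [egirth_eq_top.mpr hG, top_le_iff] at hg
    exact ENat.natCast_ne_top _ (by exact_mod_cast hg)
  exact ⟨u, c, hc, by exact_mod_cast hlen ▸ hg⟩
end

section
/- Let A^{(s)} denote the non-backtracking walk matrices of a graph on n vertices. For s, k ∈ ℕ with s ≥ k, writing s = q·k + r with 0 ≤ r < k, one has tr(A^{(s)}) ≤ √n · ‖A^{(k)}‖₂^q · ‖A^{(r)}‖_F, where ‖·‖₂ is the spectral norm and ‖·‖_F the Frobenius norm. -/
/-!
Cutting a non-backtracking walk of length `q·k + r` into `q` pieces of length `k` followed by one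
of length `r` gives non-backtracking pieces, and the walk is recovered from them; hence
`A^{(q·k+r)}` is dominated entrywise by `(A^{(k)})^q A^{(r)}`. Taking traces, Cauchy–Schwarz on the
diagonal gives `tr B ≤ √n ‖B‖_F`, and `‖M N‖_F ≤ ‖M‖₂ ‖N‖_F` holds column by column.
-/

open Matrix

/-- The matrix counting non-backtracking walks of length `s` between pairs of vertices. -/
noncomputable def nbMatrix {n : ℕ} (G : SimpleGraph (Fin n)) (s : ℕ) :
    Matrix (Fin n) (Fin n) ℝ := fun u v =>
  (Set.ncard {w : G.Walk u v |
      w.length = s ∧ List.Chain' (fun d e => e ≠ d.symm) w.darts} : ℝ)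

/-- The Frobenius norm of a real square matrix. -/
noncomputable def frobNorm {m : Type*} [Fintype m] (M : Matrix m m ℝ) : ℝ :=
  Real.sqrt (∑ i, ∑ j, (M i j) ^ 2)

namespace SimpleGraph

variable {V : Type*} {G : SimpleGraph V}

def nonBacktrackingWalks (G : SimpleGraph V) (s : ℕ) (u v : V) : Set (G.Walk u v) :=
  {w | w.length = s ∧ List.IsChain (fun d e => e ≠ d.symm) w.darts}

instance [Finite V] (s : ℕ) (u v : V) : Finite (G.nonBacktrackingWalks s u v) := by
  classical
  have : Fintype V := Fintype.ofFinite V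
  exact Finite.Set.subset {p : G.Walk u v | p.length = s} fun _ hw => hw.1

lemma take_mem_nonBacktrackingWalks {a b : ℕ} {u v : V} {p : G.Walk u v}
    (hp : p ∈ G.nonBacktrackingWalks (a + b) u v) :
    p.take a ∈ G.nonBacktrackingWalks a u (p.getVert a) :=
  ⟨by simp [hp.1], by simpa only [Walk.darts_take] using hp.2.take a⟩

lemma drop_mem_nonBacktrackingWalks {a b : ℕ} {u v : V} {p : G.Walk u v}
    (hp : p ∈ G.nonBacktrackingWalks (a + b) u v) :
    p.drop a ∈ G.nonBacktrackingWalks b (p.getVert a) v :=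
  ⟨by simp [hp.1], by simpa only [Walk.darts_drop] using hp.2.drop a⟩

-- Cutting a walk after its first `a` darts is injective: the two pieces append back to it.
lemma ncard_nonBacktrackingWalks_add_le [Fintype V] (a b : ℕ) (u v : V) :
    (G.nonBacktrackingWalks (a + b) u v).ncard ≤
      ∑ w, (G.nonBacktrackingWalks a u w).ncard * (G.nonBacktrackingWalks b w v).ncard := by
  let split (p : G.nonBacktrackingWalks (a + b) u v) :
      Σ w, G.nonBacktrackingWalks a u w × G.nonBacktrackingWalks b w v :=
    ⟨_, ⟨_, take_mem_nonBacktrackingWalks p.2⟩, ⟨_, drop_mem_nonBacktrackingWalks p.2⟩⟩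
  let join (x : Σ w, G.nonBacktrackingWalks a u w × G.nonBacktrackingWalks b w v) :
      G.Walk u v :=
    x.2.1.1.append x.2.2.1
  have hsplit : split.Injective := .of_comp (f := join) <| by
    simp [Function.comp_def, join, split, Walk.append_take_drop_eq]
  simpa [← Nat.card_coe_set_eq, Nat.card_sigma, Nat.card_prod] using
    Nat.card_le_card_of_injective split hsplit

end SimpleGraph

open SimpleGraph

section Norms

variable {m : Type*} [Fintype m]

lemma trace_le_sqrt_card_mul_frobNorm (M : Matrix m m ℝ) :
    M.trace ≤ √(Fintype.card m) * frobNorm M := by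
  have hdiag : ∑ i, M i i ^ 2 ≤ ∑ i, ∑ j, M i j ^ 2 :=
    Finset.sum_le_sum fun i _ => Finset.single_le_sum (f := fun j => M i j ^ 2)
      (fun _ _ => sq_nonneg _) (Finset.mem_univ i)
  calc M.trace = ∑ i, M i i * 1 := by simp [Matrix.trace]
    _ ≤ √(∑ i, M i i ^ 2) * √(∑ _i : m, 1 ^ 2) := Real.sum_mul_le_sqrt_mul_sqrt _ _ _
    _ = √(∑ i, M i i ^ 2) * √(Fintype.card m) := by simp
    _ ≤ √(∑ i, ∑ j, M i j ^ 2) * √(Fintype.card m) := by gcongr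
    _ = √(Fintype.card m) * frobNorm M := mul_comm _ _

variable [DecidableEq m]

lemma specNorm_nonneg (M : Matrix m m ℝ) : 0 ≤ specNorm M :=
  norm_nonneg _

lemma sum_sq_mulVec_le (M : Matrix m m ℝ) (x : m → ℝ) :
    ∑ i, (M *ᵥ x) i ^ 2 ≤ specNorm M ^ 2 * ∑ i, x i ^ 2 := by
  have h := (LinearMap.toContinuousLinearMap (Matrix.toEuclideanLin M)).le_opNorm
    (WithLp.toLp 2 x)
  have := pow_le_pow_left₀ (norm_nonneg _) h 2
  simpa [mul_pow, EuclideanSpace.real_norm_sq_eq, specNorm] using this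

lemma frobNorm_mul_le (M N : Matrix m m ℝ) :
    frobNorm (M * N) ≤ specNorm M * frobNorm N := by
  have hcol (j : m) : ∑ i, (M * N) i j ^ 2 ≤ specNorm M ^ 2 * ∑ i, N i j ^ 2 := by
    simpa [Matrix.mulVec, Matrix.mul_apply, dotProduct] using sum_sq_mulVec_le M (fun i => N i j)
  calc frobNorm (M * N) = √(∑ j, ∑ i, (M * N) i j ^ 2) := by rw [frobNorm, Finset.sum_comm]
    _ ≤ √(specNorm M ^ 2 * ∑ j, ∑ i, N i j ^ 2) := by
      rw [Finset.mul_sum]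
      gcongr with j
      exact hcol j
    _ = specNorm M * frobNorm N := by
      rw [Real.sqrt_mul (sq_nonneg _), Real.sqrt_sq (specNorm_nonneg M), frobNorm, Finset.sum_comm]

lemma frobNorm_pow_mul_le (M N : Matrix m m ℝ) (q : ℕ) :
    frobNorm (M ^ q * N) ≤ specNorm M ^ q * frobNorm N := by
  induction q with
  | zero => simp
  | succ q ih =>
    calc frobNorm (M ^ (q + 1) * N) = frobNorm (M * (M ^ q * N)) := by
          rw [pow_succ', Matrix.mul_assoc]
      _ ≤ specNorm M * (specNorm M ^ q * frobNorm N) :=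
          (frobNorm_mul_le M _).trans (by gcongr; exact specNorm_nonneg M)
      _ = specNorm M ^ (q + 1) * frobNorm N := by ring

end Norms

section NonBacktrackingMatrix

variable {n : ℕ} (G : SimpleGraph (Fin n))

lemma nbMatrix_apply (s : ℕ) (u v : Fin n) :
    nbMatrix G s u v = (G.nonBacktrackingWalks s u v).ncard :=
  rfl

lemma nbMatrix_nonneg (s : ℕ) (u v : Fin n) : 0 ≤ nbMatrix G s u v :=
  Nat.cast_nonneg _

lemma nbMatrix_add_le (a b : ℕ) (u v : Fin n) :
    nbMatrix G (a + b) u v ≤ (nbMatrix G a * nbMatrix G b) u v := by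
  simp only [Matrix.mul_apply, nbMatrix_apply]
  exact_mod_cast G.ncard_nonBacktrackingWalks_add_le a b u v

lemma nbMatrix_le_pow_mul (k r q : ℕ) (u v : Fin n) :
    nbMatrix G (q * k + r) u v ≤ (nbMatrix G k ^ q * nbMatrix G r) u v := by
  induction q generalizing u with
  | zero => simp
  | succ q ih =>
    calc nbMatrix G ((q + 1) * k + r) u v = nbMatrix G (k + (q * k + r)) u v := by ring_nf
      _ ≤ ∑ w, nbMatrix G k u w * nbMatrix G (q * k + r) w v := nbMatrix_add_le G _ _ u v
      _ ≤ ∑ w, nbMatrix G k u w * (nbMatrix G k ^ q * nbMatrix G r) w v := by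
        gcongr with w
        · exact nbMatrix_nonneg G k u w
        · exact ih w
      _ = (nbMatrix G k ^ (q + 1) * nbMatrix G r) u v := by
        rw [pow_succ', Matrix.mul_assoc, Matrix.mul_apply]

end NonBacktrackingMatrix

theorem nbMatrix_trace_bound_general (n : ℕ) (G : SimpleGraph (Fin n))
    (s k q r : ℕ) (hs : s = q * k + r) :
    (nbMatrix G s).trace ≤
      Real.sqrt n * (specNorm (nbMatrix G k)) ^ q * frobNorm (nbMatrix G r) := by
  subst hs
  calc (nbMatrix G (q * k + r)).trace ≤ (nbMatrix G k ^ q * nbMatrix G r).trace :=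
        Finset.sum_le_sum fun i _ => nbMatrix_le_pow_mul G k r q i i
    _ ≤ √n * frobNorm (nbMatrix G k ^ q * nbMatrix G r) := by
        simpa using trace_le_sqrt_card_mul_frobNorm (nbMatrix G k ^ q * nbMatrix G r)
    _ ≤ √n * (specNorm (nbMatrix G k) ^ q * frobNorm (nbMatrix G r)) := by
        gcongr
        exact frobNorm_pow_mul_le _ _ q
    _ = √n * specNorm (nbMatrix G k) ^ q * frobNorm (nbMatrix G r) := (mul_assoc ..).symm

/-- For `s = q·k + r` with `0 ≤ r < k`,
`tr(A^{(s)}) ≤ √n · ‖A^{(k)}‖₂^q · ‖A^{(r)}‖_F`. -/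
theorem nbMatrix_trace_bound (n : ℕ) (G : SimpleGraph (Fin n))
    (s k q r : ℕ) (hks : k ≤ s) (hs : s = q * k + r) (hr : r < k) :
    (nbMatrix G s).trace ≤
      Real.sqrt n * (specNorm (nbMatrix G k)) ^ q * frobNorm (nbMatrix G r) :=
  nbMatrix_trace_bound_general n G s k q r hs
end

section
/- Let k, r, n ∈ ℕ with k even and k ≤ r ≤ n, and let ℓ ∈ ℕ be even. Let A be the Kikuchi matrix with parameter r of a k-uniform hypergraph H on n vertices, and let Γ = D + d·Id where D is the degree matrix and d > 0 is the average degree of the Kikuchi graph. If H has no even cover of size at most ℓ, then ‖Γ^{-1/2} A Γ^{-1/2}‖₂ < 2 n^{r/ℓ} √(ℓ/d). -/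
open Matrix

/-- Vertices of the Kikuchi graph: `r`-element subsets of `[n]`. -/
abbrev KikuchiVert (n r : ℕ) := {S : Finset (Fin n) // S.card = r}

/-- An even cover of a hypergraph `H` is a nonempty subcollection of its hyperedges in which
every vertex appears an even number of times. -/
def EvenCover {n : ℕ} (H E : Finset (Finset (Fin n))) : Prop :=
  E ⊆ H ∧ E.Nonempty ∧ ∀ v : Fin n, Even ((E.filter (fun C => v ∈ C)).card)

/-- The degree of a vertex `S` in the Kikuchi graph of `H`. -/
def kikuchiDeg {n : ℕ} (H : Finset (Finset (Fin n))) {r : ℕ} (S : KikuchiVert n r) : ℕ :=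
  (Finset.univ.filter (fun T : KikuchiVert n r => S ≠ T ∧ symmDiff S.1 T.1 ∈ H)).card

/-!
Write `Γ = D + d·Id`, `M = Γ^{-1/2} A Γ^{-1/2}` and `B = Γ⁻¹ A`, and let `ℓ = 2m`. Since `M` is
symmetric, `‖M‖^ℓ ≤ tr M^ℓ`, and `tr M^ℓ = tr B^ℓ` by cyclicity of the trace. Now `tr B^ℓ` is the
total weight of the closed walks of length `ℓ` in the Kikuchi graph, a step out of `S` weighing
`1/Γ_S`. Each step changes the current vertex by the symmetric difference with a hyperedge, so the
hyperedges of a closed walk have empty symmetric difference; those occurring an odd number of times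
would form an even cover of size at most `ℓ`, hence at most `m` distinct hyperedges occur. From any
vertex, the steps along one of at most `m` hyperedges already used weigh at most `m/d` in total, and
all steps together at most `1`; choosing which of the `ℓ` steps use a new hyperedge gives
`tr B^ℓ ≤ N 2^ℓ (m/d)^m` with `N = C(n, r) ≤ n^r`, which is below
`(2 n^{r/ℓ} √(ℓ/d))^ℓ = n^r 2^ℓ (2m/d)^m`.
-/

theorem IsSelfAdjoint.norm_pow {E : Type*} [NormedRing E] [StarRing E] [CStarRing E] {a : E}
    (ha : IsSelfAdjoint a) {t : ℕ} (ht : t ≠ 0) : ‖a ^ t‖ = ‖a‖ ^ t := by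
  refine le_antisymm (norm_pow_le' a (Nat.pos_of_ne_zero ht)) ?_
  rcases (norm_nonneg a).eq_or_lt with h0 | hpos
  · rw [← h0, zero_pow ht]
    exact norm_nonneg _
  -- the C⋆-identity gives equality for the exponent `2 ^ t`, and `2 ^ t ≥ t`
  have htlt : t < 2 ^ t := Nat.lt_two_pow_self
  have hsplit : t + (2 ^ t - t) = 2 ^ t := by omega
  refine le_of_mul_le_mul_right ?_ (pow_pos hpos (2 ^ t - t))
  calc ‖a‖ ^ t * ‖a‖ ^ (2 ^ t - t) = ‖a ^ t * a ^ (2 ^ t - t)‖ := by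
        rw [← pow_add, ← pow_add, hsplit, ha.norm_pow_two_pow]
    _ ≤ ‖a ^ t‖ * ‖a‖ ^ (2 ^ t - t) :=
        (norm_mul_le _ _).trans (by gcongr; exact norm_pow_le' a (by omega))

section L2

open scoped Matrix.Norms.L2Operator

theorem Matrix.l2_opNorm_sq_le_sum_sq {m n : Type*} [Fintype m] [Fintype n] [DecidableEq n]
    (X : Matrix m n ℝ) : ‖X‖ ^ 2 ≤ ∑ i, ∑ j, X i j ^ 2 := by
  have hF : 0 ≤ ∑ i, ∑ j, X i j ^ 2 := by positivity
  suffices ‖X‖ ≤ √(∑ i, ∑ j, X i j ^ 2) by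
    simpa [Real.sq_sqrt hF] using pow_le_pow_left₀ (norm_nonneg X) this 2
  rw [l2_opNorm_def]
  refine ContinuousLinearMap.opNorm_le_bound _ (Real.sqrt_nonneg _) fun x => ?_
  rw [← Real.sqrt_sq (norm_nonneg x), ← Real.sqrt_mul hF, ← Real.sqrt_sq (norm_nonneg _)]
  refine Real.sqrt_le_sqrt ?_
  simp only [EuclideanSpace.real_norm_sq_eq]
  rw [Finset.sum_mul]
  refine Finset.sum_le_sum fun i _ => ?_
  simpa [Matrix.mulVec, dotProduct] using Finset.sum_mul_sq_le_sq_mul_sq _ (X i) (fun j => x j)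

theorem Matrix.IsSymm.l2_opNorm_pow_le_trace {ι : Type*} [Fintype ι] [DecidableEq ι]
    {M : Matrix ι ι ℝ} (hM : M.IsSymm) {m : ℕ} (hm : m ≠ 0) :
    ‖M‖ ^ (2 * m) ≤ trace (M ^ (2 * m)) := by
  have hMm : (M ^ m).IsSymm := hM.pow m
  calc ‖M‖ ^ (2 * m) = ‖M ^ m‖ ^ 2 := by
        rw [mul_comm, pow_mul, (isHermitian_iff_isSymm.2 hM).isSelfAdjoint.norm_pow hm]
    _ ≤ ∑ i, ∑ j, (M ^ m) i j ^ 2 := l2_opNorm_sq_le_sum_sq _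
    _ = trace (M ^ (2 * m)) := by
        rw [two_mul, pow_add]
        refine Finset.sum_congr rfl fun i _ => Finset.sum_congr rfl fun j _ => ?_
        beta_reduce
        rw [hMm.apply i j, sq]

end L2

theorem Matrix.trace_mul_pow_comm {ι R : Type*} [Fintype ι] [DecidableEq ι] [CommSemiring R]
    (X Y : Matrix ι ι R) (k : ℕ) : trace ((X * Y) ^ k) = trace ((Y * X) ^ k) := by
  cases k with
  | zero => rfl
  | succ k =>
    have hconj : X * (Y * X) ^ k = (X * Y) ^ k * X :=
      (SemiconjBy.pow_right (Matrix.mul_assoc X Y X).symm k)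
    calc trace ((X * Y) ^ (k + 1)) = trace (((X * Y) ^ k * X) * Y) := by
          rw [pow_succ, Matrix.mul_assoc]
      _ = trace (Y * X * (Y * X) ^ k) := by
          rw [← hconj, trace_mul_comm, Matrix.mul_assoc]
      _ = trace ((Y * X) ^ (k + 1)) := by rw [pow_succ']

theorem Matrix.IsSymm.diagonal_mul_mul_diagonal {ι R : Type*} [Fintype ι] [DecidableEq ι]
    [CommSemiring R] {A : Matrix ι ι R} (hA : A.IsSymm) (v : ι → R) :
    (diagonal v * A * diagonal v).IsSymm := by
  rw [IsSymm, transpose_mul, transpose_mul, diagonal_transpose, hA.eq, Matrix.mul_assoc]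

theorem Matrix.trace_pow_diagonal_rpow_mul_mul_diagonal_rpow {ι : Type*} [Fintype ι]
    [DecidableEq ι] (A : Matrix ι ι ℝ) {γ : ι → ℝ} (hγ : ∀ i, 0 ≤ γ i) (t : ℕ) :
    trace ((diagonal (fun i => γ i ^ (-(1 / 2) : ℝ)) * A *
        diagonal (fun i => γ i ^ (-(1 / 2) : ℝ))) ^ t) =
      trace ((diagonal (fun i => (γ i)⁻¹) * A) ^ t) := by
  rw [trace_mul_pow_comm, ← Matrix.mul_assoc, diagonal_mul_diagonal]
  congr 4
  funext i
  rw [← Real.rpow_add' (hγ i) (by norm_num)]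
  norm_num [Real.rpow_neg_one]

section Walks

variable {V L : Type*}

-- A walk is encoded by its start `S` and the list `p` of the vertices visited after it, so it ends
-- at `p.getLastD S`; `walkMap f S p` lists the values of `f` on its consecutive steps.
def walkMap (f : V → V → L) (S : V) (p : List V) : List L := List.zipWith f (S :: p) p

@[simp] theorem walkMap_nil (f : V → V → L) (S : V) : walkMap f S [] = [] := rfl

@[simp] theorem walkMap_cons (f : V → V → L) (S T : V) (p : List V) :
    walkMap f S (T :: p) = f S T :: walkMap f T p := rfl

@[simp] theorem length_walkMap (f : V → V → L) (S : V) (p : List V) :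
    (walkMap f S p).length = p.length := by
  simp [walkMap]

theorem Fintype.sum_fun_fin_succ {M : Type*} [Fintype V] [AddCommMonoid M] {t : ℕ}
    (F : (Fin (t + 1) → V) → M) : ∑ p, F p = ∑ T, ∑ p : Fin t → V, F (Fin.cons T p) := by
  rw [← (Fin.consEquiv fun _ => V).sum_comp, Fintype.sum_prod_type]
  rfl

theorem Matrix.pow_apply_eq_sum_walks {R : Type*} [Fintype V] [DecidableEq V] [Semiring R]
    (B : Matrix V V R) (t : ℕ) (S T : V) :
    (B ^ t) S T = ∑ p : Fin t → V,
      if (List.ofFn p).getLastD S = T then (walkMap B S (List.ofFn p)).prod else 0 := by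
  induction t generalizing S with
  | zero =>
    simp only [pow_zero, one_apply, Fintype.sum_unique, List.ofFn_zero, List.getLastD_nil]
    rfl
  | succ t ih =>
    simp only [pow_succ', mul_apply, ih, Finset.mul_sum, Fintype.sum_fun_fin_succ, List.ofFn_cons,
      List.getLastD_cons, mul_ite, mul_zero]
    rfl

theorem foldr_symmDiff_walkMap {α : Type*} [GeneralizedBooleanAlgebra α] (f : V → α) (S : V)
    (p : List V) :
    (walkMap (fun S T => symmDiff (f S) (f T)) S p).foldr symmDiff ⊥ =
      symmDiff (f S) (f (p.getLastD S)) := by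
  induction p generalizing S with
  | nil => simp
  | cons T p ih =>
    rw [walkMap_cons, List.foldr_cons, ih, List.getLastD_cons, symmDiff_assoc,
      symmDiff_symmDiff_cancel_left]

end Walks

section BudgetedWalks

variable {V L : Type*} [Fintype V] [DecidableEq L]

noncomputable def budgetedWalkSum (B : Matrix V V ℝ) (label : V → V → L) (m t : ℕ) (S : V)
    (U : Finset L) : ℝ :=
  ∑ p : Fin t → V, if (U ∪ (walkMap label S (List.ofFn p)).toFinset).card ≤ m then
    (walkMap B S (List.ofFn p)).prod else 0

variable {B : Matrix V V ℝ} {label : V → V → L} {m : ℕ}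

theorem budgetedWalkSum_zero (S : V) (U : Finset L) :
    budgetedWalkSum B label m 0 S U = if U.card ≤ m then 1 else 0 := by
  simp only [budgetedWalkSum, Fintype.sum_unique, List.ofFn_zero, walkMap_nil, List.toFinset_nil,
    Finset.union_empty]
  rfl

theorem budgetedWalkSum_succ (t : ℕ) (S : V) (U : Finset L) :
    budgetedWalkSum B label m (t + 1) S U =
      ∑ T, B S T * budgetedWalkSum B label m t T (insert (label S T) U) := by
  simp only [budgetedWalkSum, Fintype.sum_fun_fin_succ, List.ofFn_cons, walkMap_cons,
    List.toFinset_cons, Finset.union_insert, Finset.insert_union, Finset.mul_sum, mul_ite, mul_zero]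
  rfl

theorem budgetedWalkSum_eq_zero_of_lt_card {t : ℕ} {S : V} {U : Finset L} (hU : m < U.card) :
    budgetedWalkSum B label m t S U = 0 :=
  Finset.sum_eq_zero fun _ _ =>
    if_neg fun h => ((Finset.card_le_card Finset.subset_union_left).trans h).not_gt hU

theorem budgetedWalkSum_succ_le {t : ℕ} {S : V} {U : Finset L} (hB : ∀ T, 0 ≤ B S T)
    (hrow : ∑ T, B S T ≤ 1) {q : ℝ}
    (hold : ∑ T ∈ Finset.univ.filter (fun T => label S T ∈ U), B S T ≤ q)
    {a b : ℝ} (ha0 : 0 ≤ a) (hb0 : 0 ≤ b)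
    (ha : ∀ T, label S T ∈ U → budgetedWalkSum B label m t T U ≤ a)
    (hb : ∀ T, label S T ∉ U → budgetedWalkSum B label m t T (insert (label S T) U) ≤ b) :
    budgetedWalkSum B label m (t + 1) S U ≤ q * a + b := by
  rw [budgetedWalkSum_succ, ← Finset.sum_filter_add_sum_filter_not _ (fun T => label S T ∈ U)]
  gcongr ?_ + ?_
  · calc _ ≤ ∑ T ∈ Finset.univ.filter (fun T => label S T ∈ U), B S T * a :=
          Finset.sum_le_sum fun T hT => by
            rw [Finset.insert_eq_of_mem (Finset.mem_filter.1 hT).2]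
            exact mul_le_mul_of_nonneg_left (ha T (Finset.mem_filter.1 hT).2) (hB T)
      _ ≤ q * a := by
          rw [← Finset.sum_mul]
          exact mul_le_mul_of_nonneg_right hold ha0
  · calc _ ≤ ∑ T ∈ Finset.univ.filter (fun T => label S T ∉ U), B S T * b :=
          Finset.sum_le_sum fun T hT =>
            mul_le_mul_of_nonneg_left (hb T (Finset.mem_filter.1 hT).2) (hB T)
      _ ≤ ∑ T, B S T * b :=
          Finset.sum_le_sum_of_subset_of_nonneg (Finset.filter_subset _ _)
            fun T _ _ => mul_nonneg (hB T) hb0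
      _ ≤ b := by
          rw [← Finset.sum_mul]
          exact mul_le_of_le_one_left hb0 hrow

theorem budgetedWalkSum_le (hB : ∀ S T, 0 ≤ B S T) (hrow : ∀ S, ∑ T, B S T ≤ 1) {q : ℝ}
    (hq0 : 0 ≤ q) (hq1 : q ≤ 1)
    (hold : ∀ S (U : Finset L), U.card ≤ m →
      ∑ T ∈ Finset.univ.filter (fun T => label S T ∈ U), B S T ≤ q)
    (t : ℕ) (S : V) (U : Finset L) :
    budgetedWalkSum B label m t S U ≤ 2 ^ t * q ^ (t - (m - U.card)) := by
  induction t generalizing S U with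
  | zero => rw [budgetedWalkSum_zero]; split_ifs <;> norm_num
  | succ t ih =>
    rcases lt_or_ge m U.card with hU | hU
    · rw [budgetedWalkSum_eq_zero_of_lt_card hU]
      positivity
    have hq : q * (2 ^ t * q ^ (t - (m - U.card))) ≤ 2 ^ t * q ^ (t + 1 - (m - U.card)) := by
      rw [mul_left_comm, ← pow_succ']
      exact mul_le_mul_of_nonneg_left (pow_le_pow_of_le_one hq0 hq1 (by omega)) (by positivity)
    have hnew : ∀ T, label S T ∉ U → budgetedWalkSum B label m t T (insert (label S T) U) ≤
        2 ^ t * q ^ (t + 1 - (m - U.card)) := by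
      intro T hT
      have hcard := Finset.card_insert_of_notMem hT
      rcases hU.eq_or_lt with hUm | hUm
      · rw [budgetedWalkSum_eq_zero_of_lt_card (by omega)]
        positivity
      · convert ih T (insert (label S T) U) using 3
        omega
    calc _ ≤ q * (2 ^ t * q ^ (t - (m - U.card))) + 2 ^ t * q ^ (t + 1 - (m - U.card)) :=
          budgetedWalkSum_succ_le (hB S) (hrow S) (hold S U hU) (by positivity) (by positivity)
            (fun T _ => ih T U) hnew
      _ ≤ 2 ^ (t + 1) * q ^ (t + 1 - (m - U.card)) := by
          rw [pow_succ]
          linarith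

end BudgetedWalks

theorem List.mem_foldr_symmDiff_iff_odd_countP {α : Type*} [DecidableEq α]
    (cs : List (Finset α)) (v : α) :
    v ∈ cs.foldr symmDiff ∅ ↔ Odd (cs.countP (v ∈ ·)) := by
  induction cs with
  | nil => simp
  | cons C cs ih =>
    by_cases hv : v ∈ C <;> simp [Finset.mem_symmDiff, ih, hv, Nat.odd_add_one]

theorem two_mul_card_toFinset_le_length {n ℓ : ℕ} {H : Finset (Finset (Fin n))}
    (hcover : ∀ E, EvenCover H E → ℓ < E.card) {cs : List (Finset (Fin n))}
    (hH : ∀ C ∈ cs, C ∈ H) (hlen : cs.length ≤ ℓ) (hcs : cs.foldr symmDiff ∅ = ∅) :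
    2 * cs.toFinset.card ≤ cs.length := by
  set O := cs.toFinset.filter (fun C => Odd (cs.count C))
  have hO_even : ∀ v, Even (O.filter (v ∈ ·)).card := by
    intro v
    have h : Even (cs.countP (v ∈ ·)) := by
      rw [← Nat.not_odd_iff_even, ← List.mem_foldr_symmDiff_iff_odd_countP, hcs]
      exact Finset.notMem_empty v
    rw [← Finset.sum_filter_count_eq_countP, Finset.even_sum_iff_even_card_odd] at h
    simpa only [O, Finset.filter_filter, and_comm] using h
  have hO : O = ∅ := by
    by_contra hne
    refine (hcover O ⟨fun C hC => hH C (List.mem_toFinset.1 (Finset.mem_filter.1 hC).1),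
      Finset.nonempty_iff_ne_empty.2 hne, hO_even⟩).not_ge ?_
    exact (Finset.card_filter_le _ _).trans ((List.toFinset_card_le cs).trans hlen)
  have htwo : ∀ C ∈ cs.toFinset, 2 ≤ cs.count C := by
    intro C hC
    have hpos := List.count_pos_iff.2 (List.mem_toFinset.1 hC)
    have heven : ¬ Odd (cs.count C) := fun hodd =>
      Finset.notMem_empty C (hO ▸ Finset.mem_filter.2 ⟨hC, hodd⟩)
    obtain ⟨k, hk⟩ := Nat.not_odd_iff_even.1 heven
    omega
  calc 2 * cs.toFinset.card = ∑ C ∈ cs.toFinset, 2 := by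
        rw [Finset.sum_const, smul_eq_mul, mul_comm]
    _ ≤ ∑ C ∈ cs.toFinset, cs.count C := Finset.sum_le_sum htwo
    _ = cs.length := List.sum_toFinset_count_eq_length cs

section Kikuchi

variable {n r : ℕ} (H : Finset (Finset (Fin n)))

def kikuchiAdj : Matrix (KikuchiVert n r) (KikuchiVert n r) ℝ :=
  Matrix.of fun S T => if S ≠ T ∧ symmDiff S.1 T.1 ∈ H then 1 else 0

noncomputable def kikuchiWalkMatrix (d : ℝ) : Matrix (KikuchiVert n r) (KikuchiVert n r) ℝ :=
  diagonal (fun S => ((kikuchiDeg H S : ℝ) + d)⁻¹) * kikuchiAdj H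

variable {H} {d : ℝ}

theorem kikuchiAdj_isSymm : (kikuchiAdj H : Matrix (KikuchiVert n r) _ ℝ).IsSymm := by
  ext S T
  simp only [kikuchiAdj, transpose_apply, of_apply, ne_comm, symmDiff_comm]

theorem kikuchiAdj_le_one (S T : KikuchiVert n r) : kikuchiAdj H S T ≤ 1 := by
  simp only [kikuchiAdj, of_apply]
  split_ifs <;> norm_num

theorem sum_kikuchiAdj (S : KikuchiVert n r) : ∑ T, kikuchiAdj H S T = kikuchiDeg H S := by
  simp only [kikuchiAdj, of_apply, Finset.sum_boole]
  rfl

theorem kikuchiWalkMatrix_apply (S T : KikuchiVert n r) :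
    kikuchiWalkMatrix H d S T = ((kikuchiDeg H S : ℝ) + d)⁻¹ * kikuchiAdj H S T :=
  diagonal_mul _ _ _ _

theorem kikuchiWalkMatrix_nonneg (hd : 0 ≤ d) (S T : KikuchiVert n r) :
    0 ≤ kikuchiWalkMatrix H d S T := by
  rw [kikuchiWalkMatrix_apply]
  simp only [kikuchiAdj, of_apply]
  positivity

theorem sum_kikuchiWalkMatrix_le_one (hd : 0 ≤ d) (S : KikuchiVert n r) :
    ∑ T, kikuchiWalkMatrix H d S T ≤ 1 := by
  simp_rw [kikuchiWalkMatrix_apply]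
  rw [← Finset.mul_sum, sum_kikuchiAdj, inv_mul_eq_div]
  exact div_le_one_of_le₀ (by linarith) (by positivity)

theorem sum_kikuchiWalkMatrix_filter_le (hd : 0 < d) (S : KikuchiVert n r) {m : ℕ}
    {U : Finset (Finset (Fin n))} (hU : U.card ≤ m) :
    ∑ T ∈ Finset.univ.filter (fun T => symmDiff S.1 T.1 ∈ U), kikuchiWalkMatrix H d S T ≤
      min ((m : ℝ) / d) 1 := by
  have hentry : ∀ T, kikuchiWalkMatrix H d S T ≤ d⁻¹ := fun T => by
    rw [kikuchiWalkMatrix_apply]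
    calc _ ≤ ((kikuchiDeg H S : ℝ) + d)⁻¹ :=
          mul_le_of_le_one_right (by positivity) (kikuchiAdj_le_one S T)
      _ ≤ d⁻¹ := inv_anti₀ hd (by simp)
  have hcard : (Finset.univ.filter (fun T : KikuchiVert n r => symmDiff S.1 T.1 ∈ U)).card ≤
      U.card :=
    Finset.card_le_card_of_injOn (fun T => symmDiff S.1 T.1)
      (fun T hT => (Finset.mem_filter.1 hT).2)
      fun T _ T' _ h => Subtype.ext (symmDiff_right_injective S.1 h)
  refine le_min ?_ ((Finset.sum_le_sum_of_subset_of_nonneg (Finset.filter_subset _ _)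
    fun T _ _ => kikuchiWalkMatrix_nonneg hd.le S T).trans (sum_kikuchiWalkMatrix_le_one hd.le S))
  calc _ ≤ ∑ T ∈ Finset.univ.filter (fun T => symmDiff S.1 T.1 ∈ U), d⁻¹ :=
        Finset.sum_le_sum fun T _ => hentry T
    _ ≤ m / d := by
        rw [Finset.sum_const, nsmul_eq_mul, div_eq_mul_inv]
        exact mul_le_mul_of_nonneg_right (by exact_mod_cast hcard.trans hU) (by positivity)

theorem prod_walkMap_kikuchiWalkMatrix_nonneg (hd : 0 ≤ d) (S : KikuchiVert n r)
    (p : List (KikuchiVert n r)) : 0 ≤ (walkMap (kikuchiWalkMatrix H d) S p).prod := by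
  induction p generalizing S with
  | nil => exact zero_le_one
  | cons T p ih => exact mul_nonneg (kikuchiWalkMatrix_nonneg hd S T) (ih T)

theorem mem_of_prod_walkMap_kikuchiWalkMatrix_ne_zero {S : KikuchiVert n r}
    {p : List (KikuchiVert n r)} (h : (walkMap (kikuchiWalkMatrix H d) S p).prod ≠ 0) :
    ∀ C ∈ walkMap (fun S T => symmDiff S.1 T.1) S p, C ∈ H := by
  induction p generalizing S with
  | nil => simp
  | cons T p ih =>
    obtain ⟨hST, hrest⟩ := mul_ne_zero_iff.1 h
    have hmem : symmDiff S.1 T.1 ∈ H := by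
      by_contra hnot
      rw [kikuchiWalkMatrix_apply, kikuchiAdj, of_apply, if_neg fun h => hnot h.2, mul_zero] at hST
      exact hST rfl
    simp only [walkMap_cons, List.mem_cons, forall_eq_or_imp]
    exact ⟨hmem, ih hrest⟩

theorem card_toFinset_walkMap_le_of_getLastD_eq {m : ℕ}
    (hcover : ∀ E, EvenCover H E → 2 * m < E.card) {S : KikuchiVert n r}
    {p : List (KikuchiVert n r)} (hp : p.length = 2 * m) (hSS : p.getLastD S = S)
    (hprod : (walkMap (kikuchiWalkMatrix H d) S p).prod ≠ 0) :
    (walkMap (fun S T : KikuchiVert n r => symmDiff S.1 T.1) S p).toFinset.card ≤ m := by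
  have hfold := foldr_symmDiff_walkMap Subtype.val S p
  rw [hSS, symmDiff_self] at hfold
  have := two_mul_card_toFinset_le_length hcover
    (mem_of_prod_walkMap_kikuchiWalkMatrix_ne_zero hprod) (by simp [hp]) hfold
  simp only [length_walkMap, hp] at this
  omega

theorem trace_kikuchiWalkMatrix_pow_le (hd : 0 < d) {m : ℕ}
    (hcover : ∀ E, EvenCover H E → 2 * m < E.card) :
    trace (kikuchiWalkMatrix (r := r) H d ^ (2 * m)) ≤
      Fintype.card (KikuchiVert n r) * (4 ^ m * ((m : ℝ) / d) ^ m) := by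
  set B : Matrix (KikuchiVert n r) (KikuchiVert n r) ℝ := kikuchiWalkMatrix H d
  have hclosed : ∀ (S : KikuchiVert n r) (p : Fin (2 * m) → KikuchiVert n r),
      (if (List.ofFn p).getLastD S = S then (walkMap B S (List.ofFn p)).prod else 0) ≤
        if (∅ ∪ (walkMap (fun S T : KikuchiVert n r => symmDiff S.1 T.1) S
          (List.ofFn p)).toFinset).card ≤ m then (walkMap B S (List.ofFn p)).prod else 0 := by
    intro S p
    split_ifs with hSS hcard
    · exact le_rfl
    · refine not_lt.1 fun hpos => hcard ?_
      simpa using card_toFinset_walkMap_le_of_getLastD_eq hcover List.length_ofFn hSS hpos.ne'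
    · exact prod_walkMap_kikuchiWalkMatrix_nonneg hd.le S _
    · exact le_rfl
  calc trace (B ^ (2 * m))
      = ∑ S, ∑ p : Fin (2 * m) → KikuchiVert n r,
          if (List.ofFn p).getLastD S = S then (walkMap B S (List.ofFn p)).prod else 0 := by
        simp only [trace, diag, pow_apply_eq_sum_walks]
    _ ≤ ∑ S, budgetedWalkSum B (fun S T : KikuchiVert n r => symmDiff S.1 T.1) m (2 * m) S ∅ :=
        Finset.sum_le_sum fun S _ => Finset.sum_le_sum fun p _ => hclosed S p
    _ ≤ ∑ _S : KikuchiVert n r, 2 ^ (2 * m) * min ((m : ℝ) / d) 1 ^ (2 * m - (m - 0)) :=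
        Finset.sum_le_sum fun S _ => budgetedWalkSum_le (kikuchiWalkMatrix_nonneg hd.le)
          (sum_kikuchiWalkMatrix_le_one hd.le) (by positivity) (min_le_right _ _)
          (fun S _ hU => sum_kikuchiWalkMatrix_filter_le hd S hU) _ S ∅
    _ = Fintype.card (KikuchiVert n r) * (4 ^ m * min ((m : ℝ) / d) 1 ^ m) := by
        rw [show 2 * m - (m - 0) = m by omega, pow_mul, Finset.sum_const, Finset.card_univ,
          nsmul_eq_mul]
        norm_num
    _ ≤ Fintype.card (KikuchiVert n r) * (4 ^ m * ((m : ℝ) / d) ^ m) := by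
        gcongr
        exact min_le_left _ _

theorem trace_kikuchiWalkMatrix_pow (hd : 0 ≤ d) (t : ℕ) :
    trace (kikuchiWalkMatrix (r := r) H d ^ t) =
      trace ((diagonal (fun S : KikuchiVert n r => ((kikuchiDeg H S : ℝ) + d) ^ (-(1 / 2) : ℝ)) *
        kikuchiAdj H *
        diagonal (fun S : KikuchiVert n r => ((kikuchiDeg H S : ℝ) + d) ^ (-(1 / 2) : ℝ))) ^ t) :=
  (trace_pow_diagonal_rpow_mul_mul_diagonal_rpow _ (fun _ => by positivity) t).symm

end Kikuchi

theorem kikuchi_norm_bound_general (n r ℓ : ℕ) (hrn : r ≤ n) (hℓeven : Even ℓ) (hℓpos : 0 < ℓ)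
    (H : Finset (Finset (Fin n))) (d : ℝ) (hd0 : 0 < d)
    (hcover : ∀ E : Finset (Finset (Fin n)), EvenCover H E → ℓ < E.card) :
    specNorm
      (Matrix.diagonal (fun S : KikuchiVert n r => ((kikuchiDeg H S : ℝ) + d) ^ (-(1 / 2) : ℝ)) *
        Matrix.of (fun S T : KikuchiVert n r =>
          if S ≠ T ∧ symmDiff S.1 T.1 ∈ H then (1 : ℝ) else 0) *
        Matrix.diagonal (fun S : KikuchiVert n r => ((kikuchiDeg H S : ℝ) + d) ^ (-(1 / 2) : ℝ)))
      < 2 * (n : ℝ) ^ ((r : ℝ) / ℓ) * Real.sqrt ((ℓ : ℝ) / d) := by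
  obtain ⟨m, rfl⟩ := hℓeven.two_dvd
  have hm : m ≠ 0 := by omega
  have hcard : Fintype.card (KikuchiVert n r) = n.choose r := by simp [Fintype.card_finset_len]
  have hRHS : (2 * (n : ℝ) ^ ((r : ℝ) / (2 * m : ℕ)) * √((2 * m : ℕ) / d)) ^ (2 * m) =
      (n : ℝ) ^ r * (4 ^ m * ((2 * m : ℝ) / d) ^ m) := by
    rw [mul_pow, mul_pow, ← Real.rpow_mul_natCast (Nat.cast_nonneg n),
      div_mul_cancel₀ _ (by positivity), Real.rpow_natCast, pow_mul, pow_mul √_,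
      Real.sq_sqrt (by positivity)]
    push_cast
    ring
  refine lt_of_pow_lt_pow_left₀ (2 * m) (by positivity) ?_
  calc _ ≤ trace (kikuchiWalkMatrix (r := r) H d ^ (2 * m)) := by
        rw [trace_kikuchiWalkMatrix_pow hd0.le]
        exact (kikuchiAdj_isSymm.diagonal_mul_mul_diagonal _).l2_opNorm_pow_le_trace hm
    _ ≤ Fintype.card (KikuchiVert n r) * (4 ^ m * ((m : ℝ) / d) ^ m) :=
        trace_kikuchiWalkMatrix_pow_le hd0 hcover
    _ < Fintype.card (KikuchiVert n r) * (4 ^ m * ((2 * m : ℝ) / d) ^ m) := by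
        have hN : 0 < Fintype.card (KikuchiVert n r) := hcard ▸ Nat.choose_pos hrn
        gcongr
        linarith [(by positivity : (0 : ℝ) < m)]
    _ ≤ (n : ℝ) ^ r * (4 ^ m * ((2 * m : ℝ) / d) ^ m) := by
        gcongr
        exact_mod_cast hcard ▸ Nat.choose_le_pow n r
    _ = _ := hRHS.symm

/-- If a `k`-uniform hypergraph `H` (`k` even, `k ≤ r ≤ n`) has no even cover of size at most
`ℓ` (`ℓ` even), then with `Γ = D + d·Id` for the Kikuchi matrix `A`,
`‖Γ^{-1/2} A Γ^{-1/2}‖₂ < 2 n^{r/ℓ} √(ℓ/d)`. -/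
theorem kikuchi_norm_bound (n k r ℓ : ℕ) (hk : Even k) (hk0 : 0 < k)
    (hkr : k ≤ r) (hrn : r ≤ n) (hℓeven : Even ℓ) (hℓpos : 0 < ℓ)
    (H : Finset (Finset (Fin n))) (huni : ∀ C ∈ H, C.card = k)
    (d : ℝ)
    (hd : d = (∑ S : KikuchiVert n r, (kikuchiDeg H S : ℝ)) /
        (Fintype.card (KikuchiVert n r) : ℝ))
    (hd0 : 0 < d)
    (hcover : ∀ E : Finset (Finset (Fin n)), EvenCover H E → ℓ < E.card) :
    specNorm
      (Matrix.diagonal (fun S : KikuchiVert n r => ((kikuchiDeg H S : ℝ) + d) ^ (-(1 / 2) : ℝ)) *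
        Matrix.of (fun S T : KikuchiVert n r =>
          if S ≠ T ∧ symmDiff S.1 T.1 ∈ H then (1 : ℝ) else 0) *
        Matrix.diagonal (fun S : KikuchiVert n r => ((kikuchiDeg H S : ℝ) + d) ^ (-(1 / 2) : ℝ)))
      < 2 * (n : ℝ) ^ ((r : ℝ) / ℓ) * Real.sqrt ((ℓ : ℝ) / d) :=
  kikuchi_norm_bound_general n r ℓ hrn hℓeven hℓpos H d hd0 hcover
end

section
/- Let H₁, …, H_p be disjoint subsets of a k-uniform hypergraph such that within each H_j all pairs of distinct hyperedges intersect exactly in a common set U_j. If the 2(k−i)-uniform hypergraph Ĥ formed by taking symmetric differences of consecutive hyperedges within each H_j (under an arbitrary ordering) contains a repeated hyperedge, then the original hypergraph H contains an even cover of size 4. -/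
/-- If the auxiliary `2(k−i)`-uniform hypergraph of consecutive symmetric differences within
the groups `H_j` has a repeated hyperedge, i.e. two distinct pairs of distinct clauses with
equal symmetric differences, then `H` contains an even cover of size `4`. -/
theorem repeated_diff_gives_even_cover (n k i p : ℕ)
    (H : Finset (Finset (Fin n))) (huni : ∀ C ∈ H, C.card = k)
    (𝓗 : Fin p → Finset (Finset (Fin n))) (U : Fin p → Finset (Fin n))
    (hsub : ∀ j, 𝓗 j ⊆ H)
    (hdisj : Pairwise fun j j' => Disjoint (𝓗 j) (𝓗 j'))
    (hU : ∀ j, (U j).card = i)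
    (hint : ∀ j, ∀ C ∈ 𝓗 j, ∀ C' ∈ 𝓗 j, C ≠ C' → C ∩ C' = U j)
    (j j' : Fin p) (C₁ C₂ C₁' C₂' : Finset (Fin n))
    (h₁ : C₁ ∈ 𝓗 j) (h₂ : C₂ ∈ 𝓗 j) (h₁' : C₁' ∈ 𝓗 j') (h₂' : C₂' ∈ 𝓗 j')
    (hne : C₁ ≠ C₂) (hne' : C₁' ≠ C₂')
    (hpairs : ({C₁, C₂} : Finset (Finset (Fin n))) ≠ {C₁', C₂'})
    (heq : symmDiff C₁ C₂ = symmDiff C₁' C₂') :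
    ∃ E : Finset (Finset (Fin n)), EvenCover H E ∧ E.card = 4 := by
  have h13 : C₁ ≠ C₁' := by
    rintro rfl
    have : C₂ = C₂' := symmDiff_right_injective C₁ heq
    exact hpairs (by rw [this])
  have h14 : C₁ ≠ C₂' := by
    rintro rfl
    have : C₂ = C₁' := symmDiff_right_injective C₁ (heq.trans (symmDiff_comm _ _))
    apply hpairs
    rw [this]
    exact Finset.pair_comm _ _
  have h23 : C₂ ≠ C₁' := by
    rintro rfl
    have : C₁ = C₂' := symmDiff_left_injective C₂ (heq.trans (symmDiff_comm _ _))
    apply hpairs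
    rw [this]
    exact Finset.pair_comm _ _
  have h24 : C₂ ≠ C₂' := by
    rintro rfl
    have : C₁ = C₁' := symmDiff_left_injective C₂ heq
    exact hpairs (by rw [this])
  refine ⟨{C₁, C₂, C₁', C₂'}, ⟨?_, ⟨C₁, by simp⟩, ?_⟩, ?_⟩
  · intro C hC
    simp only [Finset.mem_insert, Finset.mem_singleton] at hC
    rcases hC with rfl | rfl | rfl | rfl
    exacts [hsub j h₁, hsub j h₂, hsub j' h₁', hsub j' h₂']
  · intro v
    have hv : v ∈ symmDiff C₁ C₂ ↔ v ∈ symmDiff C₁' C₂' := by rw [heq]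
    simp only [Finset.mem_symmDiff] at hv
    have key : ((({C₁, C₂, C₁', C₂'} : Finset (Finset (Fin n))).filter
        (fun C => v ∈ C)).card) =
        (if v ∈ C₁ then 1 else 0) + (if v ∈ C₂ then 1 else 0) +
        (if v ∈ C₁' then 1 else 0) + (if v ∈ C₂' then 1 else 0) := by
      rw [Finset.filter_insert, Finset.filter_insert, Finset.filter_insert,
        Finset.filter_singleton]
      by_cases a1 : v ∈ C₁ <;> by_cases a2 : v ∈ C₂ <;>
        by_cases a3 : v ∈ C₁' <;> by_cases a4 : v ∈ C₂' <;>
        simp [a1, a2, a3, a4, Finset.card_insert_of_notMem, h13, h14, h23, h24, hne, hne']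
    rw [key]
    by_cases a1 : v ∈ C₁ <;> by_cases a2 : v ∈ C₂ <;>
      by_cases a3 : v ∈ C₁' <;> by_cases a4 : v ∈ C₂' <;>
      simp_all <;> decide
  · rw [Finset.card_insert_of_notMem (by simp [h13, h14, hne]),
      Finset.card_insert_of_notMem (by simp [h23, h24]),
      Finset.card_insert_of_notMem (by simp [hne'])]
    simp
end

section
/- Run the hypergraph decomposition algorithm on a k-uniform hypergraph H with n vertices and m hyperedges (repeatedly extracting, for t = k−1 down to 1, groups of max{2, (n/r)^{k/2−t}} hyperedges sharing a common size-t set, putting leftovers in H^{(0)}). If the largest part H^{(i)} has at least m/k hyperedges and m/(nk) > (n/r)^{k/2−1}, then i ≠ 0. -/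
/-- The leftover part `H⁰` of the hypergraph decomposition satisfies the exit condition of
the `t = 1` phase: no vertex lies in `max{2, (n/r)^{k/2−1}}` or more of its hyperedges.
If `m/(nk) > (n/r)^{k/2−1}`, then `H⁰` has fewer than `m/k` hyperedges, i.e. the largest
part of the decomposition is not `H⁰`. -/
theorem decomposition_largest_part_ne_zero (n k r m : ℕ)
    (hn : 0 < n) (hr : 0 < r) (hk : 2 ≤ k) (hrn : r ≤ n)
    (H0 : Finset (Finset (Fin n))) (huni : ∀ C ∈ H0, C.card = k)
    (hdeg : ∀ v : Fin n,
      ((H0.filter (fun C => v ∈ C)).card : ℝ) <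
        max 2 (((n : ℝ) / r) ^ ((k : ℝ) / 2 - 1)))
    (hm : ((m : ℝ) / ((n : ℝ) * k)) > ((n : ℝ) / r) ^ ((k : ℝ) / 2 - 1)) :
    (H0.card : ℝ) < (m : ℝ) / k := by
  set thr : ℝ := ((n : ℝ) / r) ^ ((k : ℝ) / 2 - 1) with hthr
  have hn' : (0:ℝ) < n := by exact_mod_cast hn
  have hr' : (0:ℝ) < r := by exact_mod_cast hr
  have hk' : (2:ℝ) ≤ k := by exact_mod_cast hk
  have hk0 : (0:ℝ) < k := by linarith
  have h1 : (1:ℝ) ≤ thr := by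
    apply Real.one_le_rpow
    · rw [le_div_iff₀ hr']; exact_mod_cast (by simpa using hrn)
    · linarith
  -- max 2 thr ≤ k * thr
  have hmax : max 2 thr ≤ (k:ℝ) * thr := by
    apply max_le
    · nlinarith
    · nlinarith
  -- k * thr < m / n
  have hkthr : (k:ℝ) * thr < m / n := by
    have hm' : thr * ((n:ℝ) * k) < m := (lt_div_iff₀ (by positivity)).mp hm
    rw [lt_div_iff₀ hn']
    nlinarith
  -- double counting
  have hsum : (∑ v : Fin n, (H0.filter (fun C => v ∈ C)).card) = H0.card * k := by
    calc (∑ v : Fin n, (H0.filter (fun C => v ∈ C)).card)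
        = ∑ v : Fin n, ∑ C ∈ H0, if v ∈ C then 1 else 0 := by
          simp only [Finset.card_filter]
      _ = ∑ C ∈ H0, ∑ v : Fin n, if v ∈ C then 1 else 0 := Finset.sum_comm
      _ = ∑ C ∈ H0, C.card := by
          refine Finset.sum_congr rfl fun C _ => ?_
          rw [Finset.sum_ite_mem, Finset.univ_inter, Finset.sum_const, smul_eq_mul, mul_one]
      _ = H0.card * k := by
          rw [Finset.sum_congr rfl huni, Finset.sum_const, smul_eq_mul]
  have hlt : ((H0.card * k : ℕ) : ℝ) < m := by
    rw [← hsum]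
    push_cast
    calc (∑ v : Fin n, ((H0.filter (fun C => v ∈ C)).card : ℝ))
        < ∑ _v : Fin n, (m : ℝ) / n := by
          apply Finset.sum_lt_sum_of_nonempty
          · exact Finset.univ_nonempty_iff.mpr ⟨⟨0, hn⟩⟩
          · intro v _
            exact lt_of_lt_of_le (hdeg v) (le_of_lt (lt_of_le_of_lt hmax hkthr))
      _ = (m : ℝ) := by
          rw [Finset.sum_const, Finset.card_univ, Fintype.card_fin, nsmul_eq_mul]
          field_simp
  rw [lt_div_iff₀ hk0]
  push_cast at hlt
  linarith
end
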